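/- For every horizon T ≥ 1 and every state s, the optimal offloading decision L*_T(s) equals the smallest L ∈ {0,…,|s|} such that s̄_L is a non-offloading state, i.e., such that L*_T(s̄_L) = 0. (Such an L exists, since s̄_{|s|} = 0 is non-offloading.) -/
import Mathlib


open Finset

/-- System parameters: offloading cost, penalty cost, AMA probability,
local-processing probability, and arrival probabilities. -/
structure Params where
  Co : ℝ
  Cp : ℝ
  pa : ℝ
  mu : ℝ
  p : ℕ → ℝ

variable {N : ℕ}

/-- Partial sum `S_j(s) = ∑_{i=1}^j n_i` (components of `s` are 0-indexed). -/
def S (s : Fin N → ℕ) (j : ℕ) : ℕ :=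
  ∑ i ∈ Finset.univ.filter fun i : Fin N => (i : ℕ) < j, s i

/-- Total number of tasks `|s|`. -/
def tot (s : Fin N → ℕ) : ℕ := S s N

/-- The state obtained by offloading the `L` most imminent tasks of `s`:
`(s̄_L)_i = max(S_i(s) − L, 0) − max(S_{i−1}(s) − L, 0)` (truncated ℕ-subtraction). -/
def offload (s : Fin N → ℕ) (L : ℕ) : Fin N → ℕ :=
  fun i => (S s ((i : ℕ) + 1) - L) - (S s (i : ℕ) - L)

/-- Deadline shifting: `shift(s) = (n_2, …, n_N, 0)`. -/
def shift (s : Fin N → ℕ) : Fin N → ℕ :=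
  fun i => if h : (i : ℕ) + 1 < N then s ⟨(i : ℕ) + 1, h⟩ else 0

/-- Arrival vector `a_k`: the `k`-th standard unit vector for `1 ≤ k ≤ N`, zero for `k = 0`. -/
def avec (k : ℕ) : Fin N → ℕ := fun i => if (i : ℕ) + 1 = k then 1 else 0

/-- Local processing: remove one task of smallest deadline (identity on the zero state). -/
def proc (s : Fin N → ℕ) : Fin N → ℕ :=
  fun i => if s i ≠ 0 ∧ ∀ j : Fin N, j < i → s j = 0 then s i - 1 else s i

/-- `s''_{Lk} = shift(s̄_L) + a_k`. -/
def sdd (s : Fin N → ℕ) (L k : ℕ) : Fin N → ℕ :=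
  fun i => shift (offload s L) i + avec k i

/-- `s'_{Lk} = proc(s''_{Lk})`. -/
def sd (s : Fin N → ℕ) (L k : ℕ) : Fin N → ℕ := proc (sdd s L k)

/-- Instantaneous cost with the AMA: `𝒞^A(s,L) = C_o·L + C_p·max(n_1 − L, 0)`. -/
def costA (P : Params) (s : Fin N → ℕ) (L : ℕ) : ℝ :=
  P.Co * L + P.Cp * ((S s 1 - L : ℕ) : ℝ)

/-- Instantaneous cost without the AMA: `𝒞^Ā(s) = C_p·n_1`. -/
def costNA (P : Params) (s : Fin N → ℕ) : ℝ := P.Cp * (S s 1 : ℕ)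

/-- Expected instantaneous cost `𝒞(s,L)`. -/
def cost (P : Params) (s : Fin N → ℕ) (L : ℕ) : ℝ :=
  P.pa * costA P s L + (1 - P.pa) * costNA P s

/-- The dynamic-programming minimization, given the future-cost function `G`. -/
noncomputable def JofG (P : Params) (G : (Fin N → ℕ) → ℕ → ℝ) (s : Fin N → ℕ) : ℝ :=
  (Finset.range (tot s + 1)).inf' (Finset.nonempty_range_iff.mpr (Nat.succ_ne_zero _))
    fun L => cost P s L + P.pa * G s L + (1 - P.pa) * G s 0

/-- `G^A_T(s,L)`, defined by recursion on the horizon `T`. -/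
noncomputable def GA (P : Params) : ℕ → (Fin N → ℕ) → ℕ → ℝ
  | 0, _, _ => 0
  | T + 1, s, L =>
      P.mu * ∑ k ∈ Finset.range (N + 1), P.p k * JofG P (GA P T) (sd s L k)
        + (1 - P.mu) * ∑ k ∈ Finset.range (N + 1), P.p k * JofG P (GA P T) (sdd s L k)

/-- `J_T(s)` for horizon `T ≥ 1`. -/
noncomputable def J (P : Params) (T : ℕ) (s : Fin N → ℕ) : ℝ := JofG P (GA P (T - 1)) s

/-- `J^A_T(s,L) = 𝒞^A(s,L) + G^A_{T−1}(s,L)`. -/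
noncomputable def JA (P : Params) (T : ℕ) (s : Fin N → ℕ) (L : ℕ) : ℝ :=
  costA P s L + GA P (T - 1) s L

/-- `J^A_T(s) = min_{0 ≤ L ≤ |s|} J^A_T(s,L)`. -/
noncomputable def JAmin (P : Params) (T : ℕ) (s : Fin N → ℕ) : ℝ :=
  (Finset.range (tot s + 1)).inf' (Finset.nonempty_range_iff.mpr (Nat.succ_ne_zero _))
    (JA P T s)

/-- `J^Ā_T(s) = 𝒞^Ā(s) + G^A_{T−1}(s,0)`. -/
noncomputable def JNA (P : Params) (T : ℕ) (s : Fin N → ℕ) : ℝ :=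
  costNA P s + GA P (T - 1) s 0

/-- The optimal offloading decision: the smallest minimizer of `L ↦ J^A_T(s,L)`
over `{0,…,|s|}`. -/
noncomputable def Lstar (P : Params) (T : ℕ) (s : Fin N → ℕ) : ℕ :=
  sInf {L | L ≤ tot s ∧ ∀ L' ≤ tot s, JA P T s L ≤ JA P T s L'}

/-- The smallest deadline `d(s)` carried by a task of `s` (1-indexed). -/
noncomputable def dmin (s : Fin N → ℕ) : ℕ := sInf {j | 0 < S s j}

/-- `sa` is adjacent to `s`. -/
def Adjacent (s sa : Fin N → ℕ) : Prop :=
  (s ≠ 0 ∧ ∃ j, 1 ≤ j ∧ j ≤ dmin s ∧ sa = s + avec j) ∨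
    (s = 0 ∧ ∃ j, 1 ≤ j ∧ j ≤ N ∧ sa = avec j)

/-- `L_g`: the number of excessive tasks, `max_{1 ≤ j ≤ M} max(S_j(s) − (j−1), 0)`. -/
def Lg (s : Fin N → ℕ) (M : ℕ) : ℕ := (Finset.Icc 1 M).sup fun j => S s j - (j - 1)

/-- `Γ_j = ∑_{i=1}^j γ_i` for the parameters `γ` of Definition 2
(`γ_1 = 0`, `γ_j = min(n_j, j−1−∑_{i<j} γ_i)` for `2 ≤ j ≤ M`, `γ_j = 0` for `j > M`). -/
def Gam (s : Fin N → ℕ) (M : ℕ) : ℕ → ℕ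
  | 0 => 0
  | j + 1 =>
      if 2 ≤ j + 1 ∧ j + 1 ≤ M then
        Gam s M j + min (S s (j + 1) - S s j) (j - Gam s M j)
      else Gam s M j

/-- The lean state of `s`: `n^ℓ_i = max(γ_i, n^r_i)` where `s^r = s̄_{L_g}`. -/
def leanState (s : Fin N → ℕ) (M : ℕ) : Fin N → ℕ :=
  fun i => max (Gam s M ((i : ℕ) + 1) - Gam s M (i : ℕ)) (offload s (Lg s M) i)

/-- `F(s,L) = J^Ā_T(s̄_L) + L·C_o`. -/
noncomputable def F (P : Params) (T : ℕ) (s : Fin N → ℕ) (L : ℕ) : ℝ :=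
  JNA P T (offload s L) + L * P.Co

section Aux

variable {N : ℕ}

lemma S_zero (s : Fin N → ℕ) : S s 0 = 0 := by
  unfold S
  rw [Finset.filter_false_of_mem, Finset.sum_empty]
  intro i _; omega

lemma S_step (s : Fin N → ℕ) (j : ℕ) :
    S s (j + 1) = S s j + (if h : j < N then s ⟨j, h⟩ else 0) := by
  unfold S
  split
  · rename_i h
    have hsplit : (Finset.univ.filter fun i : Fin N => (i : ℕ) < j + 1)
        = insert (⟨j, h⟩ : Fin N) (Finset.univ.filter fun i : Fin N => (i : ℕ) < j) := by
      ext i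
      simp only [Finset.mem_filter, Finset.mem_univ, true_and, Finset.mem_insert,
        Fin.ext_iff]
      omega
    rw [hsplit, Finset.sum_insert (by simp)]
    ring
  · rename_i h
    have hsame : (Finset.univ.filter fun i : Fin N => (i : ℕ) < j + 1)
        = (Finset.univ.filter fun i : Fin N => (i : ℕ) < j) := by
      ext i
      simp only [Finset.mem_filter, Finset.mem_univ, true_and]
      have := i.isLt
      omega
    rw [hsame]; ring

lemma S_mono_step (s : Fin N → ℕ) (j : ℕ) : S s j ≤ S s (j + 1) := by
  rw [S_step]; omega

lemma S_offload (s : Fin N → ℕ) (L j : ℕ) : S (offload s L) j = S s j - L := by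
  induction j with
  | zero => rw [S_zero, S_zero]; omega
  | succ j ih =>
    rw [S_step, S_step s j, ih]
    split
    · rename_i h
      show S s j - L + ((S s (j + 1) - L) - (S s j - L)) = _
      have h1 := S_mono_step s j
      rw [S_step s j]
      split
      · omega
      · omega
    · omega

lemma offload_offload (s : Fin N → ℕ) (L L' : ℕ) :
    offload (offload s L) L' = offload s (L + L') := by
  funext i
  show (S (offload s L) ((i : ℕ) + 1) - L') - (S (offload s L) (i : ℕ) - L')
      = offload s (L + L') i
  rw [S_offload, S_offload]
  unfold offload
  omega

lemma offload_zero (u : Fin N → ℕ) : offload u 0 = u := by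
  funext i
  unfold offload
  rw [S_step]
  rw [dif_pos i.isLt]
  simp only [Nat.sub_zero, Fin.eta]
  omega

lemma tot_offload (s : Fin N → ℕ) (L : ℕ) : tot (offload s L) = tot s - L := by
  unfold tot; exact S_offload s L N

lemma GA_congr (P : Params) (T : ℕ) {s s' : Fin N → ℕ} {L L' : ℕ}
    (h : offload s L = offload s' L') : GA P T s L = GA P T s' L' := by
  cases T with
  | zero => rfl
  | succ T =>
    have hdd : ∀ k, sdd s L k = sdd s' L' k := by
      intro k; unfold sdd; rw [h]
    have hd : ∀ k, sd s L k = sd s' L' k := by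
      intro k; unfold sd; rw [hdd]
    simp only [GA, hd, hdd]

lemma JA_shift (P : Params) (T : ℕ) (s : Fin N → ℕ) (L L' : ℕ) :
    JA P T s (L + L') = P.Co * L + JA P T (offload s L) L' := by
  have hG : GA P (T - 1) s (L + L') = GA P (T - 1) (offload s L) L' :=
    GA_congr P (T - 1) (offload_offload s L L').symm
  unfold JA costA
  rw [hG, S_offload, Nat.sub_sub]
  push_cast
  ring

lemma Aset_nonempty (P : Params) (T : ℕ) (s : Fin N → ℕ) :
    {L | L ≤ tot s ∧ ∀ L' ≤ tot s, JA P T s L ≤ JA P T s L'}.Nonempty := by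
  obtain ⟨L, hL, hmin⟩ := Finset.exists_min_image (Finset.range (tot s + 1)) (JA P T s)
    (Finset.nonempty_range_iff.mpr (Nat.succ_ne_zero _))
  refine ⟨L, ?_, ?_⟩
  · exact Nat.lt_succ_iff.mp (Finset.mem_range.mp hL)
  · intro L' hL'
    exact hmin L' (Finset.mem_range.mpr (Nat.lt_succ_of_le hL'))

lemma Lstar_eq_zero_iff (P : Params) (T : ℕ) (u : Fin N → ℕ) :
    Lstar P T u = 0 ↔ ∀ L' ≤ tot u, JA P T u 0 ≤ JA P T u L' := by
  unfold Lstar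
  constructor
  · intro h
    rcases Nat.sInf_eq_zero.mp h with h0 | hempty
    · exact h0.2
    · exact absurd hempty (Set.nonempty_iff_ne_empty.mp (Aset_nonempty P T u))
  · intro h
    exact Nat.sInf_eq_zero.mpr (Or.inl ⟨Nat.zero_le _, h⟩)

end Aux

/-- L*_T(s) is the smallest L ∈ {0,…,|s|} such that s̄_L is a
non-offloading state. -/
theorem Lstar_eq_sInf_nonOffloading {N : ℕ} (hN : 1 ≤ N)
    (P : Params) (hCo : 0 < P.Co) (hCoCp : P.Co < P.Cp)
    (hpa0 : 0 ≤ P.pa) (hpa1 : P.pa ≤ 1) (hmu0 : 0 ≤ P.mu) (hmu1 : P.mu ≤ 1)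
    (hp : ∀ k ≤ N, 0 ≤ P.p k) (hpsum : ∑ k ∈ Finset.range (N + 1), P.p k = 1)
    (T : ℕ) (hT : 1 ≤ T) (s : Fin N → ℕ) :
    Lstar P T s = sInf {L | L ≤ tot s ∧ Lstar P T (offload s L) = 0} := by
  classical
  set A : Set ℕ := {L | L ≤ tot s ∧ ∀ L' ≤ tot s, JA P T s L ≤ JA P T s L'} with hA
  set B : Set ℕ := {L | L ≤ tot s ∧ Lstar P T (offload s L) = 0} with hB
  have hAne : A.Nonempty := Aset_nonempty P T s
  have hBne : B.Nonempty := by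
    refine ⟨tot s, le_refl _, ?_⟩
    rw [Lstar_eq_zero_iff]
    intro L' hL'
    rw [tot_offload] at hL'
    have hz : L' = 0 := by omega
    subst hz
    exact le_refl _
  have hmA : sInf A ∈ A := Nat.sInf_mem hAne
  have hbB : sInf B ∈ B := Nat.sInf_mem hBne
  -- the minimizer sInf A belongs to B
  have hmB : sInf A ∈ B := by
    refine ⟨hmA.1, ?_⟩
    rw [Lstar_eq_zero_iff]
    intro L' hL'
    rw [tot_offload] at hL'
    have h1 : JA P T s (sInf A + 0) = P.Co * (sInf A) + JA P T (offload s (sInf A)) 0 :=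
      JA_shift P T s (sInf A) 0
    have h2 : JA P T s (sInf A + L') = P.Co * (sInf A) + JA P T (offload s (sInf A)) L' :=
      JA_shift P T s (sInf A) L'
    have h3 : sInf A + L' ≤ tot s := by
      have := hmA.1
      omega
    have h4 : JA P T s (sInf A) ≤ JA P T s (sInf A + L') := hmA.2 _ h3
    rw [Nat.add_zero] at h1
    linarith
  -- monotone part: J at sInf B beats anything ≥ sInf B
  have hge : ∀ M, sInf B ≤ M → M ≤ tot s → JA P T s (sInf B) ≤ JA P T s M := by
    intro M hbM hM
    have hrep : M = sInf B + (M - sInf B) := by omega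
    have h1 : JA P T s (sInf B + 0) = P.Co * (sInf B) + JA P T (offload s (sInf B)) 0 :=
      JA_shift P T s (sInf B) 0
    have h2 : JA P T s (sInf B + (M - sInf B))
        = P.Co * (sInf B) + JA P T (offload s (sInf B)) (M - sInf B) :=
      JA_shift P T s (sInf B) (M - sInf B)
    have h0 := (Lstar_eq_zero_iff P T (offload s (sInf B))).mp hbB.2
    have h5 : M - sInf B ≤ tot (offload s (sInf B)) := by
      rw [tot_offload]; omega
    have h6 := h0 _ h5
    rw [Nat.add_zero] at h1
    rw [← hrep] at h2
    linarith
  -- descent part: J at sInf B is a global minimizer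
  have hbA : sInf B ∈ A := by
    refine ⟨hbB.1, ?_⟩
    have hble : sInf B ≤ tot s := hbB.1
    have key : ∀ d M, M ≤ tot s → tot s - M ≤ d → JA P T s (sInf B) ≤ JA P T s M := by
      intro d
      induction d with
      | zero =>
        intro M hM hd
        exact hge M (by omega) hM
      | succ d ih =>
        intro M hM hd
        by_cases hbM : sInf B ≤ M
        · exact hge M hbM hM
        · -- M < sInf B, so M ∉ B, so offload s M is an offloading state
          have hMnB : M ∉ B := fun hmem => absurd (Nat.sInf_le hmem) (by omega)
          have hne0 : Lstar P T (offload s M) ≠ 0 := by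
            intro h0
            exact hMnB ⟨hM, h0⟩
          have : ¬ ∀ L' ≤ tot (offload s M), JA P T (offload s M) 0
              ≤ JA P T (offload s M) L' := by
            intro hall
            exact hne0 ((Lstar_eq_zero_iff P T (offload s M)).mpr hall)
          push_neg at this
          obtain ⟨L', hL', hlt⟩ := this
          rw [tot_offload] at hL'
          have hL'pos : 1 ≤ L' := by
            rcases Nat.eq_zero_or_pos L' with h | h
            · subst h; exact absurd hlt (lt_irrefl _)
            · exact h
          have h1 : JA P T s (M + 0) = P.Co * M + JA P T (offload s M) 0 :=
            JA_shift P T s M 0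
          have h2 : JA P T s (M + L') = P.Co * M + JA P T (offload s M) L' :=
            JA_shift P T s M L'
          rw [Nat.add_zero] at h1
          have hMl : M + L' ≤ tot s := by omega
          have hrec : JA P T s (sInf B) ≤ JA P T s (M + L') := ih (M + L') hMl (by omega)
          linarith
    intro L' hL'
    exact key (tot s) L' hL' (by omega)
  have h1 : Lstar P T s ≤ sInf B := Nat.sInf_le hbA
  have h2 : sInf B ≤ Lstar P T s := Nat.sInf_le hmB
  omega
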